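/- Let p be prime, V ⊆ (Z/pZ)^r finite, g : V → (Z/pZ)^s, and suppose for all (u,v) ≠ (0,0), |∑_{z ∈ V} e^{2πi(u·z+v·g(z))/p}| ≤ K. If boxes B, B' of intervals satisfy vol(B)·vol(B') > 2^{r+s}·K²·p^{2(r+s)}/|V|², and the halved boxes ½B, ½B' (same corner, half side lengths, rounded down) are nonempty, then: if N_{B,B'}(V,g) = 0 then vol(B)·vol(B')·(|V|·vol(½B)·vol(½B')/p^{r+s})² ≤ 2^{r+s}·K²·vol(½B)·vol(½B'). -/

import Mathlib

set_option linter.unusedSectionVars false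

open Finset

/-- The standard additive character `e_p(t) = e^{2πi t/p}` on `ZMod p`. -/
noncomputable def ep (p : ℕ) (t : ZMod p) : ℂ :=
  Complex.exp (2 * Real.pi * Complex.I * t.val / p)

/-- The interval `{a, a+1, ..., a+L-1}` of `L` consecutive residues mod `p`. -/
def interval (p : ℕ) (a : ZMod p) (L : ℕ) : Finset (ZMod p) :=
  (Finset.range L).image fun m : ℕ => a + (m : ZMod p)

section ep
variable (p : ℕ) [NeZero p]

noncomputable def zet (p : ℕ) : ℂ := Complex.exp (2 * Real.pi * Complex.I / p)

lemma ep_eq_pow (t : ZMod p) : ep p t = zet p ^ t.val := by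
  rw [zet, ← Complex.exp_nat_mul, ep]
  ring_nf

lemma zet_pow_p : zet p ^ p ^ 1 = 1 := by
  rw [pow_one, zet, ← Complex.exp_nat_mul]
  have hp : (p:ℂ) ≠ 0 := by exact_mod_cast (NeZero.ne p)
  rw [show (p:ℂ) * (2 * Real.pi * Complex.I / p) = 2 * Real.pi * Complex.I by
    field_simp]
  exact Complex.exp_two_pi_mul_I

lemma zet_pow_mod (m : ℕ) : zet p ^ (m % p) = zet p ^ m := by
  conv_rhs => rw [← Nat.mod_add_div m p, pow_add, pow_mul]
  have := zet_pow_p p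
  rw [pow_one] at this
  rw [this, one_pow, mul_one]

lemma ep_add (x y : ZMod p) : ep p (x + y) = ep p x * ep p y := by
  rw [ep_eq_pow, ep_eq_pow, ep_eq_pow, ← pow_add, ZMod.val_add, zet_pow_mod]

lemma ep_zero : ep p 0 = 1 := by
  simp [ep]

lemma ep_neg_mul (x : ZMod p) : ep p x * ep p (-x) = 1 := by
  rw [← ep_add, add_neg_cancel, ep_zero]

lemma ep_sum {ι : Type*} (s : Finset ι) (f : ι → ZMod p) :
    ep p (∑ i ∈ s, f i) = ∏ i ∈ s, ep p (f i) := by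
  induction s using Finset.cons_induction with
  | empty => simpa using ep_zero p
  | cons i s hi ih => rw [Finset.sum_cons, Finset.prod_cons, ep_add, ih]

end ep

section orth
variable (p : ℕ) [NeZero p] (hp : p.Prime)
include hp

lemma zet_ne_one : zet p ≠ 1 := by
  rw [zet, Ne, Complex.exp_eq_one_iff]
  rintro ⟨n, hn⟩
  have hp0 : (p:ℂ) ≠ 0 := by exact_mod_cast hp.ne_zero
  have h2 : (2 * (Real.pi:ℂ) * Complex.I) ≠ 0 := by
    simp [Real.pi_ne_zero, Complex.I_ne_zero]
  have h3 : 2 * (Real.pi:ℂ) * Complex.I = n * (2 * Real.pi * Complex.I) * p :=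
    (div_eq_iff hp0).mp hn
  have h4 : (1:ℂ) * (2 * Real.pi * Complex.I) = ((n:ℂ) * p) * (2 * Real.pi * Complex.I) := by
    linear_combination h3
  have h5 : (1:ℂ) = (n:ℂ) * p := mul_right_cancel₀ h2 h4
  have hint : (1:ℤ) = n * p := by exact_mod_cast h5
  have hdvd : (p:ℤ) ∣ 1 := Dvd.intro_left n hint.symm
  have hle := Int.le_of_dvd one_pos hdvd
  have := hp.two_le
  omega

lemma sum_ep_eq_zero : ∑ t : ZMod p, ep p t = 0 := by
  have : ∑ t : ZMod p, ep p t = ∑ m ∈ Finset.range p, zet p ^ m := by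
    rw [Finset.sum_bij (fun (t : ZMod p) _ => t.val)]
    · intro t _; exact Finset.mem_range.mpr (ZMod.val_lt t)
    · intro t _ t' _ h; exact ZMod.val_injective _ h
    · intro m hm; exact ⟨(m : ZMod p), Finset.mem_univ _, (ZMod.val_cast_of_lt (Finset.mem_range.mp hm))⟩
    · intro t _; rw [ep_eq_pow]
  rw [this, geom_sum_eq (zet_ne_one p hp)]
  have := zet_pow_p p
  rw [pow_one] at this
  rw [this, sub_self, zero_div]

lemma sum_ep_mul (c : ZMod p) :
    ∑ t : ZMod p, ep p (t * c) = if c = 0 then (p : ℂ) else 0 := by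
  split_ifs with hc
  · subst hc
    simp only [mul_zero, ep_zero]
    simp [Finset.card_univ, ZMod.card]
  · haveI : Fact p.Prime := ⟨hp⟩
    rw [show (0:ℂ) = ∑ t : ZMod p, ep p t from (sum_ep_eq_zero p hp).symm]
    exact Fintype.sum_equiv (Equiv.mulRight₀ c (by exact hc)) _ _ (fun t => rfl)

lemma ep_delta (d : ZMod p) :
    (if d = 0 then (1:ℂ) else 0) = (∑ t : ZMod p, ep p (t * d)) / p := by
  rw [sum_ep_mul p hp]
  have hp0 : (p:ℂ) ≠ 0 := by exact_mod_cast hp.ne_zero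
  split_ifs
  · rw [div_self hp0]
  · rw [zero_div]

end orth

section more
variable (p : ℕ) [NeZero p]

open Complex in
lemma ep_conj (x : ZMod p) : (starRingEnd ℂ) (ep p x) = ep p (-x) := by
  have hne : ep p x ≠ 0 := Complex.exp_ne_zero _
  have heq : ep p x = Complex.exp ((2 * Real.pi * x.val / p : ℝ) * Complex.I) := by
    rw [ep]; push_cast; ring_nf
  have habs : ‖ep p x‖ = 1 := by
    rw [heq]; exact Complex.norm_exp_ofReal_mul_I _
  have h1 : (starRingEnd ℂ) (ep p x) * ep p x = 1 := by
    rw [mul_comm, Complex.mul_conj, Complex.normSq_eq_norm_sq, habs]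
    norm_num
  have h2 : ep p (-x) * ep p x = 1 := by
    rw [mul_comm]; exact ep_neg_mul p x
  exact mul_right_cancel₀ hne (h1.trans h2.symm)

lemma ep_conj_sum (I : Finset (ZMod p)) (t : ZMod p) :
    (∑ w ∈ I, ep p (-(t * w))) * (∑ w ∈ I, ep p (t * w))
      = (Complex.normSq (∑ w ∈ I, ep p (t * w)) : ℂ) := by
  rw [show (∑ w ∈ I, ep p (-(t * w))) = (starRingEnd ℂ) (∑ w ∈ I, ep p (t * w)) by
    rw [map_sum]; exact Finset.sum_congr rfl fun w _ => (ep_conj p (t*w)).symm]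
  rw [mul_comm, Complex.mul_conj]

variable (hp : p.Prime)
include hp

lemma indicator_eq (I : Finset (ZMod p)) (c : ZMod p) :
    (if c ∈ I then (1:ℂ) else 0)
      = (∑ t : ZMod p, ∑ w ∈ I, ep p (t * (c - w))) / p := by
  rw [Finset.sum_comm]
  have : ∀ w ∈ I, (∑ t : ZMod p, ep p (t * (c - w))) = if w = c then (p:ℂ) else 0 := by
    intro w _
    rw [sum_ep_mul p hp]
    congr 1
    simp [sub_eq_zero, eq_comm]
  rw [Finset.sum_congr rfl this, Finset.sum_ite_eq' I c (fun _ => (p:ℂ))]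
  have hp0 : (p:ℂ) ≠ 0 := by exact_mod_cast hp.ne_zero
  split_ifs
  · rw [div_self hp0]
  · rw [zero_div]

lemma parseval (I : Finset (ZMod p)) :
    ∑ t : ZMod p, (Complex.normSq (∑ w ∈ I, ep p (t * w)) : ℂ) = p * I.card := by
  have : ∀ t : ZMod p, (Complex.normSq (∑ w ∈ I, ep p (t * w)) : ℂ)
      = ∑ w ∈ I, ∑ w' ∈ I, ep p (t * (w' - w)) := by
    intro t
    rw [← ep_conj_sum p I t, Finset.sum_mul_sum]
    refine Finset.sum_congr rfl fun w _ => Finset.sum_congr rfl fun w' _ => ?_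
    rw [← ep_add]
    ring_nf
  rw [Finset.sum_congr rfl fun t _ => this t, Finset.sum_comm]
  have h2 : ∀ w ∈ I, ∑ t : ZMod p, ∑ w' ∈ I, ep p (t * (w' - w)) = (p:ℂ) := by
    intro w hw
    rw [Finset.sum_comm]
    have : ∀ w' ∈ I, (∑ t : ZMod p, ep p (t * (w' - w))) = if w' = w then (p:ℂ) else 0 := by
      intro w' _
      rw [sum_ep_mul p hp]; congr 1; simp [sub_eq_zero]
    rw [Finset.sum_congr rfl this, Finset.sum_ite_eq' I w (fun _ => (p:ℂ)), if_pos hw]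
  rw [Finset.sum_congr rfl h2, Finset.sum_const, nsmul_eq_mul]
  ring

end more


section intv
variable (p : ℕ) [NeZero p]

lemma card_interval (a : ZMod p) (L : ℕ) (hL : L ≤ p) : (interval p a L).card = L := by
  rw [interval, Finset.card_image_of_injOn, Finset.card_range]
  intro m hm m' hm' h
  have : (m : ZMod p) = (m' : ZMod p) := by
    have := add_left_cancel h
    exact this
  have h1 : m = (m : ZMod p).val := (ZMod.val_cast_of_lt (lt_of_lt_of_le (Finset.mem_range.mp hm) hL)).symm
  have h2 : m' = (m' : ZMod p).val := (ZMod.val_cast_of_lt (lt_of_lt_of_le (Finset.mem_range.mp hm') hL)).symm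
  rw [h1, h2, this]

lemma count_shift (I : Finset (ZMod p)) (c : ZMod p) :
    (Finset.univ.filter fun t : ZMod p => c - t ∈ I).card = I.card := by
  apply Finset.card_nbij' (i := fun t => c - t) (j := fun w => c - w)
  · intro t ht
    simpa using (Finset.mem_filter.mp ht).2
  · intro w hw
    simpa using hw
  · intro t _; simp
  · intro w _; simp

end intv

noncomputable def Ff (p : ℕ) (I : Finset (ZMod p)) (t : ZMod p) : ℂ := ∑ w ∈ I, ep p (t * w)

noncomputable def ind (p : ℕ) (I : Finset (ZMod p)) (c : ZMod p) : ℂ := if c ∈ I then 1 else 0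

section corr
variable (p : ℕ) [NeZero p] (hp : p.Prime)
include hp

lemma ind_corr (I : Finset (ZMod p)) (c c' : ZMod p) :
    ∑ t : ZMod p, ind p I (c - t) * ind p I (c' - t)
      = (∑ t : ZMod p, (Complex.normSq (Ff p I t) : ℂ) * ep p (t * (c' - c))) / p := by
  have step1 : ∀ t : ZMod p, ind p I (c - t) = ∑ w ∈ I, if w = c - t then (1:ℂ) else 0 := by
    intro t
    rw [Finset.sum_ite_eq' I (c - t) (fun _ => (1:ℂ)), ind]
  have step2 : ∑ t : ZMod p, ind p I (c - t) * ind p I (c' - t)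
      = ∑ w ∈ I, ind p I (c' - (c - w)) := by
    calc ∑ t : ZMod p, ind p I (c - t) * ind p I (c' - t)
        = ∑ t : ZMod p, ∑ w ∈ I, (if w = c - t then (1:ℂ) else 0) * ind p I (c' - t) := by
          refine Finset.sum_congr rfl fun t _ => ?_
          rw [step1 t, Finset.sum_mul]
      _ = ∑ w ∈ I, ∑ t : ZMod p, (if t = c - w then (1:ℂ) else 0) * ind p I (c' - t) := by
          rw [Finset.sum_comm]
          refine Finset.sum_congr rfl fun w _ => Finset.sum_congr rfl fun t _ => ?_
          have hiff : (w = c - t) ↔ (t = c - w) := by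
            constructor
            · rintro rfl; rw [sub_sub_cancel]
            · rintro rfl; rw [sub_sub_cancel]
          rw [if_congr hiff rfl rfl]
      _ = ∑ w ∈ I, ind p I (c' - (c - w)) := by
          refine Finset.sum_congr rfl fun w _ => ?_
          rw [Finset.sum_congr rfl (fun t _ => by
            rw [show ((if t = c - w then (1:ℂ) else 0) * ind p I (c' - t))
              = (if t = c - w then ind p I (c' - t) else 0) by split_ifs <;> simp])]
          rw [Finset.sum_ite_eq' Finset.univ (c - w) (fun t => ind p I (c' - t)),
            if_pos (Finset.mem_univ _)]
  rw [step2]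
  have step3 : ∀ w ∈ I, ind p I (c' - (c - w))
      = (∑ t : ZMod p, ∑ w' ∈ I, ep p (t * ((c' - (c - w)) - w'))) / p := by
    intro w _
    exact indicator_eq p hp I (c' - (c - w))
  rw [Finset.sum_congr rfl step3, ← Finset.sum_div]
  congr 1
  rw [Finset.sum_comm]
  refine Finset.sum_congr rfl fun t _ => ?_
  have expand : ∀ w ∈ I, ∑ w' ∈ I, ep p (t * ((c' - (c - w)) - w'))
      = ep p (t * (c' - c)) * ep p (t * w) * ∑ w' ∈ I, ep p (-(t * w')) := by
    intro w _
    rw [Finset.mul_sum]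
    refine Finset.sum_congr rfl fun w' _ => ?_
    rw [show t * ((c' - (c - w)) - w') = t * (c' - c) + (t * w + -(t * w')) by ring,
      ep_add, ep_add]
    ring
  rw [Finset.sum_congr rfl expand, ← Finset.sum_mul, ← Finset.mul_sum, mul_assoc,
    mul_comm (∑ w ∈ I, ep p (t * w)) _, ep_conj_sum p I t, Ff]
  ring

end corr

section swaps
variable {α β γ δ : Type*}

lemma swap3 (sa : Finset α) (sb : Finset β) (sc : Finset γ)
    (X : α → γ → ℂ) (Y : β → γ → ℂ) :
    ∑ x ∈ sa, ∑ y ∈ sb, ∑ z ∈ sc, X x z * Y y z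
      = ∑ z ∈ sc, (∑ x ∈ sa, X x z) * (∑ y ∈ sb, Y y z) := by
  have h1 : ∀ x ∈ sa, ∑ y ∈ sb, ∑ z ∈ sc, X x z * Y y z
      = ∑ z ∈ sc, X x z * ∑ y ∈ sb, Y y z := by
    intro x _
    rw [Finset.sum_comm]
    exact Finset.sum_congr rfl fun z _ => by rw [← Finset.mul_sum]
  rw [Finset.sum_congr rfl h1, Finset.sum_comm]
  exact Finset.sum_congr rfl fun z _ => by rw [← Finset.sum_mul]

lemma swap4 (sa : Finset α) (sb : Finset β) (sc : Finset γ) (sd : Finset δ)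
    (X : α → γ → δ → ℂ) (Y : β → γ → δ → ℂ) :
    ∑ x ∈ sa, ∑ y ∈ sb, ∑ z ∈ sc, ∑ z' ∈ sd, X x z z' * Y y z z'
      = ∑ z ∈ sc, ∑ z' ∈ sd, (∑ x ∈ sa, X x z z') * (∑ y ∈ sb, Y y z z') := by
  have h1 : ∀ x ∈ sa, ∑ y ∈ sb, ∑ z ∈ sc, ∑ z' ∈ sd, X x z z' * Y y z z'
      = ∑ z ∈ sc, ∑ y ∈ sb, ∑ z' ∈ sd, X x z z' * Y y z z' := fun x _ => Finset.sum_comm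
  rw [Finset.sum_congr rfl h1, Finset.sum_comm]
  refine Finset.sum_congr rfl fun z _ => ?_
  exact swap3 sa sb sd (fun x z' => X x z z') (fun y z' => Y y z z')

end swaps

section genconj
variable (p : ℕ) [NeZero p]

lemma sum_ep_neg_mul {γ : Type*} (s : Finset γ) (f : γ → ZMod p) :
    (∑ z ∈ s, ep p (-(f z))) * (∑ z ∈ s, ep p (f z))
      = (Complex.normSq (∑ z ∈ s, ep p (f z)) : ℂ) := by
  rw [show (∑ z ∈ s, ep p (-(f z))) = (starRingEnd ℂ) (∑ z ∈ s, ep p (f z)) by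
    rw [map_sum]; exact Finset.sum_congr rfl fun w _ => (ep_conj p (f w)).symm]
  rw [mul_comm, Complex.mul_conj]

end genconj

section boxcorr
variable (p : ℕ) [NeZero p] (hp : p.Prime)
include hp

lemma box_corr (r : ℕ) (I : Fin r → Finset (ZMod p)) (z z' : Fin r → ZMod p) :
    ∑ x : Fin r → ZMod p, ∏ i, (ind p (I i) (z i - x i) * ind p (I i) (z' i - x i))
      = (∑ u : Fin r → ZMod p,
          (∏ i, (Complex.normSq (Ff p (I i) (u i)) : ℂ)) * ep p (∑ i, u i * (z' i - z i)))
        / (p:ℂ)^r := by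
  rw [← Fintype.prod_sum (fun i t => ind p (I i) (z i - t) * ind p (I i) (z' i - t))]
  rw [Finset.prod_congr rfl fun i _ => ind_corr p hp (I i) (z i) (z' i)]
  rw [Finset.prod_div_distrib, Finset.prod_const, Finset.card_univ, Fintype.card_fin]
  congr 1
  rw [Fintype.prod_sum (fun i t => (Complex.normSq (Ff p (I i) t) : ℂ) * ep p (t * (z' i - z i)))]
  refine Finset.sum_congr rfl fun u _ => ?_
  rw [Finset.prod_mul_distrib, ep_sum]

end boxcorr

section counts
variable (p : ℕ) [NeZero p] (r s : ℕ)
  (V : Finset (Fin r → ZMod p)) (g : (Fin r → ZMod p) → (Fin s → ZMod p))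
  (I : Fin r → Finset (ZMod p)) (J : Fin s → Finset (ZMod p))

lemma card_filter_eq_sum (x : Fin r → ZMod p) (y : Fin s → ZMod p) :
    (((V.filter fun z => (∀ i, z i - x i ∈ I i) ∧ (∀ j, g z j - y j ∈ J j)).card : ℂ))
      = ∑ z ∈ V, (∏ i, ind p (I i) (z i - x i)) * (∏ j, ind p (J j) (g z j - y j)) := by
  classical
  rw [Finset.card_filter]
  push_cast
  refine Finset.sum_congr rfl fun z _ => ?_
  by_cases h1 : ∀ i, z i - x i ∈ I i <;> by_cases h2 : ∀ j, g z j - y j ∈ J j <;>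
    simp [ind, Fintype.prod_boole, h1, h2]

lemma sum_count :
    ∑ x : Fin r → ZMod p, ∑ y : Fin s → ZMod p,
        (((V.filter fun z => (∀ i, z i - x i ∈ I i) ∧ (∀ j, g z j - y j ∈ J j)).card : ℂ))
      = V.card * (∏ i, ((I i).card : ℂ)) * ∏ j, ((J j).card : ℂ) := by
  classical
  rw [Finset.sum_congr rfl fun x _ => Finset.sum_congr rfl fun y _ =>
    card_filter_eq_sum p r s V g I J x y]
  have hswap := swap3 Finset.univ Finset.univ V
    (fun (x z : Fin r → ZMod p) => ∏ i, ind p (I i) (z i - x i))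
    (fun (y : Fin s → ZMod p) (z : Fin r → ZMod p) => ∏ j, ind p (J j) (g z j - y j))
  refine Eq.trans hswap ?_
  have hx : ∀ z ∈ V, (∑ x : Fin r → ZMod p, ∏ i, ind p (I i) (z i - x i))
      = ∏ i, ((I i).card : ℂ) := by
    intro z _
    rw [← Fintype.prod_sum (fun i t => ind p (I i) (z i - t))]
    refine Finset.prod_congr rfl fun i _ => ?_
    rw [show (∑ t : ZMod p, ind p (I i) (z i - t))
        = ∑ t : ZMod p, if z i - t ∈ I i then (1:ℂ) else 0 from rfl]
    rw [Finset.sum_boole]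
    rw [count_shift p (I i) (z i)]
  have hy : ∀ z ∈ V, (∑ y : Fin s → ZMod p, ∏ j, ind p (J j) (g z j - y j))
      = ∏ j, ((J j).card : ℂ) := by
    intro z _
    rw [← Fintype.prod_sum (fun j t => ind p (J j) (g z j - t))]
    refine Finset.prod_congr rfl fun j _ => ?_
    rw [show (∑ t : ZMod p, ind p (J j) (g z j - t))
        = ∑ t : ZMod p, if g z j - t ∈ J j then (1:ℂ) else 0 from rfl]
    rw [Finset.sum_boole]
    rw [count_shift p (J j) (g z j)]
  rw [Finset.sum_congr rfl fun z hz => by rw [hx z hz, hy z hz]]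
  rw [Finset.sum_const, nsmul_eq_mul, mul_assoc]

end counts

section sumsq
variable (p : ℕ) [NeZero p] (hp : p.Prime) (r s : ℕ)
  (V : Finset (Fin r → ZMod p)) (g : (Fin r → ZMod p) → (Fin s → ZMod p))
  (I : Fin r → Finset (ZMod p)) (J : Fin s → Finset (ZMod p))

include hp

lemma sum_sq_count :
    ∑ x : Fin r → ZMod p, ∑ y : Fin s → ZMod p,
        (((V.filter fun z => (∀ i, z i - x i ∈ I i) ∧ (∀ j, g z j - y j ∈ J j)).card : ℂ))^2
      = (∑ u : Fin r → ZMod p, ∑ v : Fin s → ZMod p,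
          (∏ i, (Complex.normSq (Ff p (I i) (u i)) : ℂ))
            * (∏ j, (Complex.normSq (Ff p (J j) (v j)) : ℂ))
            * (Complex.normSq (∑ z ∈ V, ep p (∑ i, u i * z i + ∑ j, v j * g z j)) : ℂ))
        / (p:ℂ)^(r+s) := by
  classical
  have step1 : ∀ (x : Fin r → ZMod p) (y : Fin s → ZMod p),
      (((V.filter fun z => (∀ i, z i - x i ∈ I i) ∧ (∀ j, g z j - y j ∈ J j)).card : ℂ))^2
        = ∑ z ∈ V, ∑ z' ∈ V,
            (∏ i, (ind p (I i) (z i - x i) * ind p (I i) (z' i - x i)))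
              * (∏ j, (ind p (J j) (g z j - y j) * ind p (J j) (g z' j - y j))) := by
    intro x y
    rw [card_filter_eq_sum p r s V g I J x y, sq, Finset.sum_mul_sum]
    refine Finset.sum_congr rfl fun z _ => Finset.sum_congr rfl fun z' _ => ?_
    rw [Finset.prod_mul_distrib, Finset.prod_mul_distrib]
    ring
  rw [Finset.sum_congr rfl fun x _ => Finset.sum_congr rfl fun y _ => step1 x y]
  have hswap := swap4 (Finset.univ : Finset (Fin r → ZMod p))
    (Finset.univ : Finset (Fin s → ZMod p)) V V
    (fun (x : Fin r → ZMod p) (z z' : Fin r → ZMod p) =>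
      ∏ i, (ind p (I i) (z i - x i) * ind p (I i) (z' i - x i)))
    (fun (y : Fin s → ZMod p) (z z' : Fin r → ZMod p) =>
      ∏ j, (ind p (J j) (g z j - y j) * ind p (J j) (g z' j - y j)))
  refine Eq.trans hswap ?_
  have step3 : ∀ z ∈ V, ∀ z' ∈ V,
      (∑ x : Fin r → ZMod p, ∏ i, (ind p (I i) (z i - x i) * ind p (I i) (z' i - x i)))
        * (∑ y : Fin s → ZMod p, ∏ j, (ind p (J j) (g z j - y j) * ind p (J j) (g z' j - y j)))
      = ((∑ u : Fin r → ZMod p,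
            (∏ i, (Complex.normSq (Ff p (I i) (u i)) : ℂ)) * ep p (∑ i, u i * (z' i - z i)))
          * (∑ v : Fin s → ZMod p,
            (∏ j, (Complex.normSq (Ff p (J j) (v j)) : ℂ)) * ep p (∑ j, v j * (g z' j - g z j))))
        / (p:ℂ)^(r+s) := by
    intro z _ z' _
    rw [box_corr p hp r I z z', box_corr p hp s J (g z) (g z'),
      div_mul_div_comm, ← pow_add]
  rw [Finset.sum_congr rfl fun z hz => Finset.sum_congr rfl fun z' hz' => step3 z hz z' hz']
  rw [Finset.sum_congr rfl fun z _ => (Finset.sum_div _ _ _).symm, ← Finset.sum_div]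
  congr 1
  have hswap2 := (swap4 (Finset.univ : Finset (Fin r → ZMod p))
    (Finset.univ : Finset (Fin s → ZMod p)) V V
    (fun (u : Fin r → ZMod p) (z z' : Fin r → ZMod p) =>
      (∏ i, (Complex.normSq (Ff p (I i) (u i)) : ℂ)) * ep p (∑ i, u i * (z' i - z i)))
    (fun (v : Fin s → ZMod p) (z z' : Fin r → ZMod p) =>
      (∏ j, (Complex.normSq (Ff p (J j) (v j)) : ℂ)) * ep p (∑ j, v j * (g z' j - g z j)))).symm
  refine Eq.trans hswap2 ?_
  refine Finset.sum_congr rfl fun u _ => Finset.sum_congr rfl fun v _ => ?_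
  have step5 : ∀ z ∈ V, ∀ z' ∈ V,
      ((∏ i, (Complex.normSq (Ff p (I i) (u i)) : ℂ)) * ep p (∑ i, u i * (z' i - z i)))
        * ((∏ j, (Complex.normSq (Ff p (J j) (v j)) : ℂ)) * ep p (∑ j, v j * (g z' j - g z j)))
      = ((∏ i, (Complex.normSq (Ff p (I i) (u i)) : ℂ))
          * (∏ j, (Complex.normSq (Ff p (J j) (v j)) : ℂ)))
        * (ep p (-(∑ i, u i * z i + ∑ j, v j * g z j))
            * ep p (∑ i, u i * z' i + ∑ j, v j * g z' j)) := by
    intro z _ z' _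
    rw [show (∏ i, (Complex.normSq (Ff p (I i) (u i)) : ℂ)) * ep p (∑ i, u i * (z' i - z i))
        * ((∏ j, (Complex.normSq (Ff p (J j) (v j)) : ℂ)) * ep p (∑ j, v j * (g z' j - g z j)))
        = ((∏ i, (Complex.normSq (Ff p (I i) (u i)) : ℂ))
          * (∏ j, (Complex.normSq (Ff p (J j) (v j)) : ℂ)))
          * (ep p (∑ i, u i * (z' i - z i)) * ep p (∑ j, v j * (g z' j - g z j))) by ring]
    congr 1
    rw [← ep_add, ← ep_add]
    congr 1
    simp only [mul_sub, Finset.sum_sub_distrib]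
    ring
  rw [Finset.sum_congr rfl fun z hz => Finset.sum_congr rfl fun z' hz' => step5 z hz z' hz']
  rw [Finset.sum_congr rfl fun z _ => (Finset.mul_sum _ _ _).symm, ← Finset.mul_sum]
  congr 1
  rw [← Finset.sum_mul_sum]
  exact sum_ep_neg_mul p V (fun z => ∑ i, u i * z i + ∑ j, v j * g z j)

end sumsq

theorem stmt_16 (p r s : ℕ) (hp : p.Prime) [NeZero p]
    (V : Finset (Fin r → ZMod p)) (g : (Fin r → ZMod p) → (Fin s → ZMod p)) (K : ℝ)
    (hK : ∀ (u : Fin r → ZMod p) (v : Fin s → ZMod p), (u, v) ≠ (0, 0) →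
      ‖∑ z ∈ V, ep p (∑ i, u i * z i + ∑ j, v j * g z j)‖ ≤ K)
    (a : Fin r → ZMod p) (L : Fin r → ℕ) (hL : ∀ i, L i ≤ p)
    (b : Fin s → ZMod p) (L' : Fin s → ℕ) (hL' : ∀ j, L' j ≤ p)
    (hvol : 2 ^ (r + s) * K ^ 2 * (p : ℝ) ^ (2 * (r + s)) / (V.card : ℝ) ^ 2 <
      (∏ i, (L i : ℝ)) * ∏ j, (L' j : ℝ))
    (hhalf : ∀ i, 0 < L i / 2) (hhalf' : ∀ j, 0 < L' j / 2) :
    (V.filter fun z =>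
        (∀ i, z i ∈ interval p (a i) (L i)) ∧
        (∀ j, g z j ∈ interval p (b j) (L' j))).card = 0 →
      (∏ i, (L i : ℝ)) * (∏ j, (L' j : ℝ)) *
          ((V.card : ℝ) * (∏ i, ((L i / 2 : ℕ) : ℝ)) * (∏ j, ((L' j / 2 : ℕ) : ℝ)) /
            (p : ℝ) ^ (r + s)) ^ 2 ≤
        2 ^ (r + s) * K ^ 2 * (∏ i, ((L i / 2 : ℕ) : ℝ)) * ∏ j, ((L' j / 2 : ℕ) : ℝ) := by
  classical
  intro hN
  set I : Fin r → Finset (ZMod p) := fun i => interval p (a i) (L i / 2) with hIdef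
  set J : Fin s → Finset (ZMod p) := fun j => interval p (b j) (L' j / 2) with hJdef
  set T : ℝ := (p : ℝ) ^ (r + s) with hTdef
  set vH : ℝ := ∏ i, ((L i / 2 : ℕ) : ℝ) with hvHdef
  set vH' : ℝ := ∏ j, ((L' j / 2 : ℕ) : ℝ) with hvH'def
  set μ : ℝ := (V.card : ℝ) * vH * vH' / T with hmudef
  have hppos : (0:ℝ) < p := by exact_mod_cast hp.pos
  have hT0 : 0 < T := pow_pos hppos _
  have hcardI : ∀ i, (I i).card = L i / 2 :=
    fun i => card_interval p _ _ ((Nat.div_le_self _ _).trans (hL i))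
  have hcardJ : ∀ j, (J j).card = L' j / 2 :=
    fun j => card_interval p _ _ ((Nat.div_le_self _ _).trans (hL' j))
  set N : (Fin r → ZMod p) → (Fin s → ZMod p) → ℕ := fun x y =>
    (V.filter fun z => (∀ i, z i - x i ∈ I i) ∧ (∀ j, g z j - y j ∈ J j)).card with hNdef
  set W : (Fin r → ZMod p) → ℝ := fun u => ∏ i, Complex.normSq (Ff p (I i) (u i)) with hWdef
  set W' : (Fin s → ZMod p) → ℝ := fun v => ∏ j, Complex.normSq (Ff p (J j) (v j)) with hW'def
  set Sc : (Fin r → ZMod p) → (Fin s → ZMod p) → ℂ := fun u v =>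
    ∑ z ∈ V, ep p (∑ i, u i * z i + ∑ j, v j * g z j) with hScdef
  -- first moment
  have hS1 : ∑ x : Fin r → ZMod p, ∑ y : Fin s → ZMod p, (N x y : ℝ)
      = (V.card : ℝ) * vH * vH' := by
    have h := sum_count p r s V g I J
    have h2 : ∑ x : Fin r → ZMod p, ∑ y : Fin s → ZMod p, (N x y : ℝ)
        = (V.card : ℝ) * (∏ i, ((I i).card : ℝ)) * ∏ j, ((J j).card : ℝ) := by
      exact_mod_cast h
    rw [h2]
    congr 1
    · congr 1
      exact Finset.prod_congr rfl fun i _ => by rw [hcardI i]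
    · exact Finset.prod_congr rfl fun j _ => by rw [hcardJ j]
  -- second moment
  have hS2 : ∑ x : Fin r → ZMod p, ∑ y : Fin s → ZMod p, (N x y : ℝ) ^ 2
      = (∑ u : Fin r → ZMod p, ∑ v : Fin s → ZMod p, W u * W' v * Complex.normSq (Sc u v))
        / T := by
    have h := sum_sq_count p hp r s V g I J
    rw [hTdef]
    exact_mod_cast h
  -- variance identity
  have hTmu : T * μ = (V.card : ℝ) * vH * vH' := by
    rw [hmudef]; field_simp
  have hcardUr : ((Fintype.card (Fin r → ZMod p) : ℕ) : ℝ) = (p:ℝ)^r := by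
    rw [Fintype.card_fun, ZMod.card, Fintype.card_fin]; push_cast; ring
  have hcardUs : ((Fintype.card (Fin s → ZMod p) : ℕ) : ℝ) = (p:ℝ)^s := by
    rw [Fintype.card_fun, ZMod.card, Fintype.card_fin]; push_cast; ring
  have hVar : ∑ x : Fin r → ZMod p, ∑ y : Fin s → ZMod p, ((N x y : ℝ) - μ)^2
      = (∑ u : Fin r → ZMod p, ∑ v : Fin s → ZMod p, W u * W' v * Complex.normSq (Sc u v)) / T
        - T * μ^2 := by
    have e1 : ∑ x : Fin r → ZMod p, ∑ y : Fin s → ZMod p, ((N x y : ℝ) - μ)^2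
        = ∑ x : Fin r → ZMod p, ∑ y : Fin s → ZMod p,
            ((N x y : ℝ)^2 - 2*μ*(N x y : ℝ) + μ^2) :=
      Finset.sum_congr rfl fun x _ => Finset.sum_congr rfl fun y _ => by ring
    rw [e1]
    have e2 : ∑ x : Fin r → ZMod p, ∑ y : Fin s → ZMod p,
          ((N x y : ℝ)^2 - 2*μ*(N x y : ℝ) + μ^2)
        = (∑ x : Fin r → ZMod p, ∑ y : Fin s → ZMod p, (N x y : ℝ)^2)
          - 2*μ*(∑ x : Fin r → ZMod p, ∑ y : Fin s → ZMod p, (N x y : ℝ))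
          + ((Fintype.card (Fin r → ZMod p) : ℝ) * (Fintype.card (Fin s → ZMod p) : ℝ)) * μ^2 := by
      simp only [Finset.sum_add_distrib, Finset.sum_sub_distrib, ← Finset.mul_sum,
        Finset.sum_const, Finset.card_univ, nsmul_eq_mul]
      push_cast
      ring
    rw [e2, hS1, hS2, hcardUr, hcardUs]
    have : (p:ℝ)^r * (p:ℝ)^s = T := by rw [hTdef, pow_add]
    rw [this]
    have h3 : (V.card : ℝ) * vH * vH' = T * μ := hTmu.symm
    rw [h3]
    ring
  -- zero coefficient values
  have hFf0 : ∀ (If : Finset (ZMod p)), Ff p If 0 = (If.card : ℂ) := by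
    intro If
    rw [Ff]
    rw [Finset.sum_congr rfl fun w _ => by rw [zero_mul, ep_zero]]
    rw [Finset.sum_const, nsmul_eq_mul, mul_one]
  have hnormSqNat : ∀ n : ℕ, Complex.normSq ((n:ℕ) : ℂ) = (n:ℝ)^2 := by
    intro n
    rw [show ((n:ℕ) : ℂ) = (((n:ℝ)) : ℂ) by push_cast; rfl, Complex.normSq_ofReal]
    ring
  have hW0 : W 0 = vH^2 := by
    rw [hWdef]
    simp only [Pi.zero_apply]
    rw [Finset.prod_congr rfl fun i (_ : i ∈ Finset.univ) => by
      rw [hFf0 (I i), hnormSqNat, hcardI i]]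
    rw [← Finset.prod_pow]
  have hW'0 : W' 0 = vH'^2 := by
    rw [hW'def]
    simp only [Pi.zero_apply]
    rw [Finset.prod_congr rfl fun j (_ : j ∈ Finset.univ) => by
      rw [hFf0 (J j), hnormSqNat, hcardJ j]]
    rw [← Finset.prod_pow]
  have hS00 : Sc 0 0 = (V.card : ℂ) := by
    rw [hScdef]
    simp only [Pi.zero_apply, zero_mul, Finset.sum_const_zero, add_zero, ep_zero]
    rw [Finset.sum_const, nsmul_eq_mul, mul_one]
  have hterm0 : W 0 * W' 0 * Complex.normSq (Sc 0 0) = (T*μ)^2 := by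
    rw [hW0, hW'0, hS00, hnormSqNat, hTmu]
    ring
  -- split off the zero frequency
  have hsplit : ∑ u : Fin r → ZMod p, ∑ v : Fin s → ZMod p, W u * W' v * Complex.normSq (Sc u v)
      = W 0 * W' 0 * Complex.normSq (Sc 0 0)
        + ∑ q ∈ (Finset.univ.erase ((0,0) : (Fin r → ZMod p) × (Fin s → ZMod p))),
            W q.1 * W' q.2 * Complex.normSq (Sc q.1 q.2) := by
    rw [← Fintype.sum_prod_type (f := fun q : (Fin r → ZMod p) × (Fin s → ZMod p) =>
      W q.1 * W' q.2 * Complex.normSq (Sc q.1 q.2))]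
    rw [← Finset.add_sum_erase _ _ (Finset.mem_univ ((0,0) : (Fin r → ZMod p) × (Fin s → ZMod p)))]
  -- Parseval
  have hparsU : ∑ u : Fin r → ZMod p, W u = (p:ℝ)^r * vH := by
    rw [hWdef]
    rw [← Fintype.prod_sum (fun i t => Complex.normSq (Ff p (I i) t))]
    have hper : ∀ i : Fin r, ∑ t : ZMod p, Complex.normSq (Ff p (I i) t)
        = (p:ℝ) * ((L i / 2 : ℕ) : ℝ) := by
      intro i
      have := parseval p hp (I i)
      have h2 : ∑ t : ZMod p, Complex.normSq (Ff p (I i) t) = (p:ℝ) * ((I i).card : ℝ) := by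
        exact_mod_cast this
      rw [h2, hcardI i]
    rw [Finset.prod_congr rfl fun i (_ : i ∈ Finset.univ) => hper i,
      Finset.prod_mul_distrib, Finset.prod_const, Finset.card_univ, Fintype.card_fin]
  have hparsU' : ∑ v : Fin s → ZMod p, W' v = (p:ℝ)^s * vH' := by
    rw [hW'def]
    rw [← Fintype.prod_sum (fun j t => Complex.normSq (Ff p (J j) t))]
    have hper : ∀ j : Fin s, ∑ t : ZMod p, Complex.normSq (Ff p (J j) t)
        = (p:ℝ) * ((L' j / 2 : ℕ) : ℝ) := by
      intro j
      have := parseval p hp (J j)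
      have h2 : ∑ t : ZMod p, Complex.normSq (Ff p (J j) t) = (p:ℝ) * ((J j).card : ℝ) := by
        exact_mod_cast this
      rw [h2, hcardJ j]
    rw [Finset.prod_congr rfl fun j (_ : j ∈ Finset.univ) => hper j,
      Finset.prod_mul_distrib, Finset.prod_const, Finset.card_univ, Fintype.card_fin]
  have hparsTot : ∑ q : (Fin r → ZMod p) × (Fin s → ZMod p), W q.1 * W' q.2
      = T * (vH * vH') := by
    rw [Fintype.sum_prod_type (f := fun q : (Fin r → ZMod p) × (Fin s → ZMod p) =>
      W q.1 * W' q.2)]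
    rw [show ∑ u : Fin r → ZMod p, ∑ v : Fin s → ZMod p, W u * W' v
        = (∑ u : Fin r → ZMod p, W u) * (∑ v : Fin s → ZMod p, W' v) from
      (Finset.sum_mul_sum _ _ _ _).symm]
    rw [hparsU, hparsU', hTdef, pow_add]
    ring
  have hWnonneg : ∀ u, 0 ≤ W u := fun u =>
    Finset.prod_nonneg fun i _ => Complex.normSq_nonneg _
  have hW'nonneg : ∀ v, 0 ≤ W' v := fun v =>
    Finset.prod_nonneg fun j _ => Complex.normSq_nonneg _
  -- bound away from zero frequency
  have hbound : ∑ q ∈ (Finset.univ.erase ((0,0) : (Fin r → ZMod p) × (Fin s → ZMod p))),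
        W q.1 * W' q.2 * Complex.normSq (Sc q.1 q.2)
      ≤ K^2 * (T * (vH * vH')) := by
    rw [← hparsTot]
    by_cases hK0 : 0 ≤ K
    · calc ∑ q ∈ (Finset.univ.erase ((0,0) : (Fin r → ZMod p) × (Fin s → ZMod p))),
            W q.1 * W' q.2 * Complex.normSq (Sc q.1 q.2)
          ≤ ∑ q ∈ (Finset.univ.erase ((0,0) : (Fin r → ZMod p) × (Fin s → ZMod p))),
            W q.1 * W' q.2 * K^2 := by
            refine Finset.sum_le_sum fun q hq => ?_
            refine mul_le_mul_of_nonneg_left ?_ (mul_nonneg (hWnonneg q.1) (hW'nonneg q.2))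
            have hq0 : (q.1, q.2) ≠ ((0,0) : (Fin r → ZMod p) × (Fin s → ZMod p)) := by
              rw [show (q.1, q.2) = q from rfl]
              exact Finset.ne_of_mem_erase hq
            have := hK q.1 q.2 hq0
            have habs : ‖Sc q.1 q.2‖ ≤ K := by
              rw [hScdef]; exact_mod_cast this
            rw [Complex.normSq_eq_norm_sq]
            exact pow_le_pow_left₀ (norm_nonneg _) habs 2
        _ ≤ ∑ q : (Fin r → ZMod p) × (Fin s → ZMod p), W q.1 * W' q.2 * K^2 := by
            refine Finset.sum_le_sum_of_subset_of_nonneg (Finset.subset_univ _) ?_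
            intro q _ _
            exact mul_nonneg (mul_nonneg (hWnonneg q.1) (hW'nonneg q.2)) (sq_nonneg K)
        _ = K^2 * ∑ q : (Fin r → ZMod p) × (Fin s → ZMod p), W q.1 * W' q.2 := by
            rw [← Finset.sum_mul, mul_comm]
    · have hzero : ∑ q ∈ (Finset.univ.erase ((0,0) : (Fin r → ZMod p) × (Fin s → ZMod p))),
          W q.1 * W' q.2 * Complex.normSq (Sc q.1 q.2) = 0 := by
        refine Finset.sum_eq_zero fun q hq => ?_
        exfalso
        have hq0 : (q.1, q.2) ≠ ((0,0) : (Fin r → ZMod p) × (Fin s → ZMod p)) := by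
          rw [show (q.1, q.2) = q from rfl]
          exact Finset.ne_of_mem_erase hq
        have := hK q.1 q.2 hq0
        have := le_trans (norm_nonneg _) this
        exact hK0 this
      rw [hzero]
      refine mul_nonneg (sq_nonneg K) ?_
      exact Finset.sum_nonneg fun q _ => mul_nonneg (hWnonneg q.1) (hW'nonneg q.2)
  -- variance bound
  have hVarBound : ∑ x : Fin r → ZMod p, ∑ y : Fin s → ZMod p, ((N x y : ℝ) - μ)^2
      ≤ K^2 * (vH * vH') := by
    rw [hVar, hsplit, hterm0]
    have : ((T*μ)^2 + ∑ q ∈ (Finset.univ.erase ((0,0) : (Fin r → ZMod p) × (Fin s → ZMod p))),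
        W q.1 * W' q.2 * Complex.normSq (Sc q.1 q.2)) / T - T * μ^2
        = (∑ q ∈ (Finset.univ.erase ((0,0) : (Fin r → ZMod p) × (Fin s → ZMod p))),
            W q.1 * W' q.2 * Complex.normSq (Sc q.1 q.2)) / T := by
      field_simp
      ring
    rw [this]
    rw [div_le_iff₀ hT0]
    calc (∑ q ∈ (Finset.univ.erase ((0,0) : (Fin r → ZMod p) × (Fin s → ZMod p))),
          W q.1 * W' q.2 * Complex.normSq (Sc q.1 q.2))
        ≤ K^2 * (T * (vH * vH')) := hbound
      _ = K^2 * (vH * vH') * T := by ring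
  -- good translates
  set Gx : Finset (Fin r → ZMod p) :=
    Fintype.piFinset (fun i => (Finset.range (L i - L i / 2)).image (Nat.cast : ℕ → ZMod p))
    with hGxdef
  set Gy : Finset (Fin s → ZMod p) :=
    Fintype.piFinset (fun j => (Finset.range (L' j - L' j / 2)).image (Nat.cast : ℕ → ZMod p))
    with hGydef
  have hinj : ∀ M : ℕ, M ≤ p → Set.InjOn (Nat.cast : ℕ → ZMod p) (Finset.range M) := by
    intro M hM m hm m' hm' h
    simp only [Finset.coe_range, Set.mem_Iio] at hm hm'
    have h1 := ZMod.val_cast_of_lt (lt_of_lt_of_le hm hM)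
    have h2 := ZMod.val_cast_of_lt (lt_of_lt_of_le hm' hM)
    rw [← h1, ← h2, h]
  have hGxcard : (Gx.card : ℝ) = ∏ i, ((L i - L i / 2 : ℕ) : ℝ) := by
    rw [hGxdef, Fintype.card_piFinset]
    push_cast
    refine Finset.prod_congr rfl fun i _ => ?_
    rw [Finset.card_image_of_injOn (hinj _ (le_trans (Nat.sub_le _ _) (hL i))),
      Finset.card_range]
  have hGycard : (Gy.card : ℝ) = ∏ j, ((L' j - L' j / 2 : ℕ) : ℝ) := by
    rw [hGydef, Fintype.card_piFinset]
    push_cast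
    refine Finset.prod_congr rfl fun j _ => ?_
    rw [Finset.card_image_of_injOn (hinj _ (le_trans (Nat.sub_le _ _) (hL' j))),
      Finset.card_range]
  have hNzero : ∀ x ∈ Gx, ∀ y ∈ Gy, N x y = 0 := by
    intro x hx y hy
    rw [hNdef]
    rw [Finset.card_eq_zero, Finset.eq_empty_iff_forall_notMem]
    intro z hz
    rw [Finset.mem_filter] at hz
    obtain ⟨hzV, h1, h2⟩ := hz
    have hempty := Finset.card_eq_zero.mp hN
    rw [Finset.eq_empty_iff_forall_notMem] at hempty
    refine hempty z (Finset.mem_filter.mpr ⟨hzV, ?_, ?_⟩)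
    · intro i
      have hxi := Fintype.mem_piFinset.mp hx i
      obtain ⟨m, hm, hxm⟩ := Finset.mem_image.mp hxi
      rw [Finset.mem_range] at hm
      have hz1 := h1 i
      rw [hIdef] at hz1
      obtain ⟨m', hm', hzm'⟩ := Finset.mem_image.mp hz1
      rw [Finset.mem_range] at hm'
      rw [interval, Finset.mem_image]
      have hmm : m' + m < L i := by
        have h := Nat.add_lt_add hm' hm
        rwa [Nat.add_sub_cancel' (Nat.div_le_self _ _)] at h
      have heq : z i = (z i - x i) + x i := by ring
      refine ⟨m' + m, Finset.mem_range.mpr hmm, ?_⟩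
      rw [heq, ← hzm', ← hxm]
      push_cast
      ring
    · intro j
      have hyj := Fintype.mem_piFinset.mp hy j
      obtain ⟨m, hm, hym⟩ := Finset.mem_image.mp hyj
      rw [Finset.mem_range] at hm
      have hz2 := h2 j
      rw [hJdef] at hz2
      obtain ⟨m', hm', hzm'⟩ := Finset.mem_image.mp hz2
      rw [Finset.mem_range] at hm'
      rw [interval, Finset.mem_image]
      have hmm : m' + m < L' j := by
        have h := Nat.add_lt_add hm' hm
        rwa [Nat.add_sub_cancel' (Nat.div_le_self _ _)] at h
      have heq : g z j = (g z j - y j) + y j := by ring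
      refine ⟨m' + m, Finset.mem_range.mpr hmm, ?_⟩
      rw [heq, ← hzm', ← hym]
      push_cast
      ring
  -- lower bound via good translates
  have hlow : (∏ i, ((L i - L i / 2 : ℕ) : ℝ)) * (∏ j, ((L' j - L' j / 2 : ℕ) : ℝ)) * μ^2
      ≤ ∑ x : Fin r → ZMod p, ∑ y : Fin s → ZMod p, ((N x y : ℝ) - μ)^2 := by
    have hsub : ∑ x ∈ Gx, ∑ y ∈ Gy, ((N x y : ℝ) - μ)^2
        ≤ ∑ x : Fin r → ZMod p, ∑ y : Fin s → ZMod p, ((N x y : ℝ) - μ)^2 := by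
      calc ∑ x ∈ Gx, ∑ y ∈ Gy, ((N x y : ℝ) - μ)^2
          ≤ ∑ x ∈ Gx, ∑ y : Fin s → ZMod p, ((N x y : ℝ) - μ)^2 := by
            refine Finset.sum_le_sum fun x _ => ?_
            exact Finset.sum_le_sum_of_subset_of_nonneg (Finset.subset_univ _)
              (fun y _ _ => sq_nonneg _)
        _ ≤ ∑ x : Fin r → ZMod p, ∑ y : Fin s → ZMod p, ((N x y : ℝ) - μ)^2 := by
            refine Finset.sum_le_sum_of_subset_of_nonneg (Finset.subset_univ _) ?_
            intro x _ _
            exact Finset.sum_nonneg fun y _ => sq_nonneg _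
    refine le_trans ?_ hsub
    have heval : ∑ x ∈ Gx, ∑ y ∈ Gy, ((N x y : ℝ) - μ)^2
        = (Gx.card : ℝ) * ((Gy.card : ℝ) * μ^2) := by
      have h0 : ∀ x ∈ Gx, ∀ y ∈ Gy, ((N x y : ℝ) - μ)^2 = μ^2 := fun x hx y hy => by
        rw [hNzero x hx y hy]; push_cast; ring
      rw [Finset.sum_congr rfl fun x hx => Finset.sum_congr rfl fun y hy => h0 x hx y hy]
      rw [Finset.sum_congr rfl fun x _ => Finset.sum_const _, Finset.sum_const]
      simp [nsmul_eq_mul]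
    rw [heval, hGxcard, hGycard]
    exact le_of_eq (by ring)
  -- comparing with halved volumes
  have hhalfle : ((∏ i, (L i : ℝ)) * ∏ j, (L' j : ℝ)) / 2^(r+s)
      ≤ (∏ i, ((L i - L i / 2 : ℕ) : ℝ)) * (∏ j, ((L' j - L' j / 2 : ℕ) : ℝ)) := by
    have h1 : ∀ i : Fin r, (L i : ℝ) / 2 ≤ ((L i - L i / 2 : ℕ) : ℝ) := by
      intro i
      rw [Nat.cast_sub (Nat.div_le_self _ _)]
      have := Nat.cast_div_le (α := ℝ) (m := L i) (n := 2)
      push_cast at this ⊢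
      linarith
    have h2 : ∀ j : Fin s, (L' j : ℝ) / 2 ≤ ((L' j - L' j / 2 : ℕ) : ℝ) := by
      intro j
      rw [Nat.cast_sub (Nat.div_le_self _ _)]
      have := Nat.cast_div_le (α := ℝ) (m := L' j) (n := 2)
      push_cast at this ⊢
      linarith
    have e1 : (∏ i, (L i : ℝ)) / 2^r = ∏ i, ((L i : ℝ) / 2) := by
      rw [Finset.prod_div_distrib, Finset.prod_const, Finset.card_univ, Fintype.card_fin]
    have e2 : (∏ j, (L' j : ℝ)) / 2^s = ∏ j, ((L' j : ℝ) / 2) := by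
      rw [Finset.prod_div_distrib, Finset.prod_const, Finset.card_univ, Fintype.card_fin]
    have p1 : ∏ i, ((L i : ℝ) / 2) ≤ ∏ i, ((L i - L i / 2 : ℕ) : ℝ) :=
      Finset.prod_le_prod (fun i _ => by positivity) (fun i _ => h1 i)
    have p2 : ∏ j, ((L' j : ℝ) / 2) ≤ ∏ j, ((L' j - L' j / 2 : ℕ) : ℝ) :=
      Finset.prod_le_prod (fun j _ => by positivity) (fun j _ => h2 j)
    have hmn1 : (0:ℝ) ≤ ∏ i, ((L i : ℝ) / 2) := Finset.prod_nonneg fun i _ => by positivity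
    have hmn2 : (0:ℝ) ≤ ∏ j, ((L' j : ℝ) / 2) := Finset.prod_nonneg fun j _ => by positivity
    have hmn3 : (0:ℝ) ≤ ∏ j, ((L' j - L' j / 2 : ℕ) : ℝ) :=
      Finset.prod_nonneg fun j _ => Nat.cast_nonneg _
    calc ((∏ i, (L i : ℝ)) * ∏ j, (L' j : ℝ)) / 2^(r+s)
        = ((∏ i, (L i : ℝ)) / 2^r) * ((∏ j, (L' j : ℝ)) / 2^s) := by
          rw [pow_add]; ring
      _ = (∏ i, ((L i : ℝ) / 2)) * (∏ j, ((L' j : ℝ) / 2)) := by rw [e1, e2]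
      _ ≤ (∏ i, ((L i - L i / 2 : ℕ) : ℝ)) * (∏ j, ((L' j - L' j / 2 : ℕ) : ℝ)) := by
          exact mul_le_mul p1 p2 hmn2 (le_trans hmn1 p1)
  -- final assembly
  have hfinal : ((∏ i, (L i : ℝ)) * ∏ j, (L' j : ℝ)) / 2^(r+s) * μ^2 ≤ K^2 * (vH * vH') := by
    calc ((∏ i, (L i : ℝ)) * ∏ j, (L' j : ℝ)) / 2^(r+s) * μ^2
        ≤ (∏ i, ((L i - L i / 2 : ℕ) : ℝ)) * (∏ j, ((L' j - L' j / 2 : ℕ) : ℝ)) * μ^2 :=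
          mul_le_mul_of_nonneg_right hhalfle (sq_nonneg μ)
      _ ≤ ∑ x : Fin r → ZMod p, ∑ y : Fin s → ZMod p, ((N x y : ℝ) - μ)^2 := hlow
      _ ≤ K^2 * (vH * vH') := hVarBound
  have h2pos : (0:ℝ) < 2^(r+s) := by positivity
  rw [div_mul_eq_mul_div, div_le_iff₀ h2pos] at hfinal
  calc (∏ i, (L i : ℝ)) * (∏ j, (L' j : ℝ)) * μ^2 ≤ K^2 * (vH * vH') * 2^(r+s) := hfinal
    _ = 2 ^ (r + s) * K ^ 2 * vH * vH' := by ring
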